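/- arXiv:1004.0167 — 2 statements merged into one kernel-verified Lean document; each statement's English description precedes it below -/
import Mathlib

section
/- Let A be a discrete almost periodic set in ℝ^p. Then the number of elements of A contained in any ball of radius 1 is uniformly bounded: there exists N ∈ ℕ such that for every x ∈ ℝ^p the set A ∩ B(x, 1) has at most N elements. -/
open Pointwise

noncomputable section

/-- A set `S ⊆ ℝ^p` is relatively dense if there is `R` such that every ball of
radius `R` contains a point of `S`. -/
def RelativelyDense {p : ℕ} (S : Set (EuclideanSpace ℝ (Fin p))) : Prop :=
  ∃ R : ℝ, ∀ x : EuclideanSpace ℝ (Fin p), ∃ s ∈ S, dist x s ≤ R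

/-- A set `A ⊆ ℝ^p` is discrete: closed with finite intersection with every compact set. -/
def DiscreteSet {p : ℕ} (A : Set (EuclideanSpace ℝ (Fin p))) : Prop :=
  IsClosed A ∧ ∀ K : Set (EuclideanSpace ℝ (Fin p)), IsCompact K → (A ∩ K).Finite

/-- `τ` is an `ε`-almost period of `A`: there is a bijection `σ : A → A` with
`|a + τ - σ a| < ε` for all `a ∈ A`. -/
def IsAlmostPeriodOf {p : ℕ} (A : Set (EuclideanSpace ℝ (Fin p))) (ε : ℝ)
    (τ : EuclideanSpace ℝ (Fin p)) : Prop :=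
  ∃ σ : A ≃ A, ∀ a : A,
    ‖(a : EuclideanSpace ℝ (Fin p)) + τ - (σ a : EuclideanSpace ℝ (Fin p))‖ < ε

/-- `A` is an almost periodic set: for every `ε > 0` its set of `ε`-almost periods is
relatively dense. -/
def AlmostPeriodicSet {p : ℕ} (A : Set (EuclideanSpace ℝ (Fin p))) : Prop :=
  ∀ ε : ℝ, 0 < ε → RelativelyDense {τ | IsAlmostPeriodOf A ε τ}

/-- `L` is a full rank lattice: the set of integer linear combinations of `p` linearly
independent vectors of `ℝ^p`. -/
def IsFullRankLattice {p : ℕ} (L : Set (EuclideanSpace ℝ (Fin p))) : Prop :=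
  ∃ T : Fin p → EuclideanSpace ℝ (Fin p), LinearIndependent ℝ T ∧
    L = {x | ∃ n : Fin p → ℤ, x = ∑ i, (n i : ℝ) • T i}

/-!
A `1`-almost period `τ` of `A` with `‖x + τ‖ ≤ R` exists for every `x`; its bijection `σ` maps
`A ∩ B(x, 1)` injectively into `A ∩ B(x + τ, 2) ⊆ A ∩ B̄(0, R + 2)`, a finite set independent of `x`.
-/

open Metric

section

variable {p : ℕ} {A : Set (EuclideanSpace ℝ (Fin p))}

theorem IsAlmostPeriodOf.encard_inter_ball_le {ε : ℝ} {τ : EuclideanSpace ℝ (Fin p)}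
    (hτ : IsAlmostPeriodOf A ε τ) (x : EuclideanSpace ℝ (Fin p)) (r : ℝ) :
    (A ∩ ball x r).encard ≤ (A ∩ ball (x + τ) (r + ε)).encard := by
  obtain ⟨σ, hσ⟩ := hτ
  have hmem (a : A) (ha : (a : EuclideanSpace ℝ (Fin p)) ∈ ball x r) :
      (σ a : EuclideanSpace ℝ (Fin p)) ∈ ball (x + τ) (r + ε) := by
    have hsplit : (σ a : EuclideanSpace ℝ (Fin p)) - (x + τ) = (a - x) - (a + τ - σ a) := by
      abel
    rw [mem_ball, dist_eq_norm, hsplit]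
    rw [mem_ball, dist_eq_norm] at ha
    linarith [norm_sub_le ((a : EuclideanSpace ℝ (Fin p)) - x) (a + τ - σ a), hσ a]
  let f : ↥(A ∩ ball x r) → ↥(A ∩ ball (x + τ) (r + ε)) := fun a =>
    ⟨σ ⟨a, a.2.1⟩, (σ ⟨a, a.2.1⟩).2, hmem ⟨a, a.2.1⟩ a.2.2⟩
  refine ENat.card_le_card_of_injective (f := f) fun a b hab => ?_
  have hσab : σ ⟨a, a.2.1⟩ = σ ⟨b, b.2.1⟩ := Subtype.ext (congrArg Subtype.val hab :)
  simpa [Subtype.ext_iff] using σ.injective hσab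

theorem RelativelyDense.exists_mem_norm_add_le {S : Set (EuclideanSpace ℝ (Fin p))}
    (hS : RelativelyDense S) : ∃ R : ℝ, ∀ x, ∃ τ ∈ S, ‖x + τ‖ ≤ R := by
  obtain ⟨R, hR⟩ := hS
  refine ⟨R, fun x => ?_⟩
  obtain ⟨τ, hτS, hτ⟩ := hR (-x)
  refine ⟨τ, hτS, ?_⟩
  rwa [dist_eq_norm, ← norm_neg, neg_sub, sub_neg_eq_add, add_comm] at hτ

theorem DiscreteSet.finite_inter_closedBall (hA : DiscreteSet A)
    (x : EuclideanSpace ℝ (Fin p)) (r : ℝ) : (A ∩ closedBall x r).Finite :=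
  hA.2 _ (isCompact_closedBall x r)

end

/-- For a discrete almost periodic set, the number of its points in any ball of
radius `1` is uniformly bounded. -/
theorem discrete_almostPeriodic_uniformly_bounded_in_unit_balls {p : ℕ}
    (A : Set (EuclideanSpace ℝ (Fin p)))
    (hdisc : DiscreteSet A) (hap : AlmostPeriodicSet A) :
    ∃ N : ℕ, ∀ x : EuclideanSpace ℝ (Fin p),
      (A ∩ Metric.ball x 1).encard ≤ N := by
  obtain ⟨R, hR⟩ := (hap 1 one_pos).exists_mem_norm_add_le
  have hfin := hdisc.finite_inter_closedBall 0 (R + 2)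
  refine ⟨hfin.toFinset.card, fun x => ?_⟩
  obtain ⟨τ, hτ, hxτ⟩ := hR x
  have hball : ball (x + τ) (1 + 1) ⊆ closedBall 0 (R + 2) := by
    refine ball_subset_closedBall.trans (closedBall_subset_closedBall' ?_)
    rw [dist_zero_right]
    linarith
  calc (A ∩ ball x 1).encard
      ≤ (A ∩ ball (x + τ) (1 + 1)).encard := hτ.encard_inter_ball_le x 1
    _ ≤ (A ∩ closedBall 0 (R + 2)).encard :=
        Set.encard_le_encard (Set.inter_subset_inter_right A hball)
    _ = hfin.toFinset.card := hfin.encard_eq_coe_toFinset_card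
end
end

section
/- Let A be a nonempty discrete almost periodic set in ℝ^p of finite type. Then there exists ε > 0 such that every (ε/2)-almost period τ of A lies within distance ε/2 of an exact period of A: there exists T ∈ ℝ^p with A + T = A and |T − τ| < ε/2. Consequently, the set of periods {T ∈ ℝ^p : A + T = A} is relatively dense in ℝ^p. -/
/-! The displacements `σ a - a` of an `ε/2`-almost period `τ` all lie within `ε` of each other.
For nearby `a, b ∈ A` the differences `a - b` and `σ a - σ b` are then two `ε`-close elements
of a bounded piece of the discrete set `A - A`, hence equal once `ε` is below its minimal
separation; so the displacement is locally constant. Since `A` is relatively dense and `ℝ^p` is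
connected, it is constant, and that constant is an exact period within `ε/2` of `τ`. -/

open Pointwise

noncomputable section

/-- `T` is a period of `A`: `A + T = A`. -/
def IsPeriodOf {p : ℕ} (A : Set (EuclideanSpace ℝ (Fin p)))
    (T : EuclideanSpace ℝ (Fin p)) : Prop :=
  (fun x => x + T) '' A = A

open Metric

theorem Set.Finite.exists_pos_forall_dist_lt_imp_eq {X : Type*} [MetricSpace X] {s : Set X}
    (hs : s.Finite) : ∃ ε > 0, ∀ x ∈ s, ∀ y ∈ s, dist x y < ε → x = y := by
  rcases s.subsingleton_or_nontrivial with hsub | hnt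
  · exact ⟨1, one_pos, fun x hx y hy _ => hsub hx hy⟩
  · refine ⟨s.infsep, hs.infsep_pos_iff_nontrivial.2 hnt, fun x hx y hy hxy => ?_⟩
    by_contra hne
    exact (infsep_le_dist_of_mem hx hy hne).not_gt hxy

/-- The `r/2`-thickenings of the level sets of `f` are disjoint open sets covering the space. -/
theorem eq_of_forall_dist_lt_of_forall_exists_dist_le {X β : Type*} [PseudoMetricSpace X]
    [PreconnectedSpace X] {S : Set X} {R r : ℝ} (hS : ∀ x, ∃ s ∈ S, dist x s ≤ R)
    (hRr : 2 * R < r) {f : S → β} (hf : ∀ a b : S, dist (a : X) b < r → f a = f b)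
    (a b : S) : f a = f b := by
  have hr : 0 < r / 2 := by
    obtain ⟨s, -, hs⟩ := hS a
    linarith [dist_nonneg (x := (a : X)) (y := s)]
  by_contra hab
  let U := thickening (r / 2) (Subtype.val '' {c : S | f c = f a})
  let V := thickening (r / 2) (Subtype.val '' {c : S | f c ≠ f a})
  have hcover : Set.univ ⊆ U ∪ V := fun x _ => by
    obtain ⟨s, hs, hxs⟩ := hS x
    have hxs' : dist x s < r / 2 := by linarith
    by_cases h : f ⟨s, hs⟩ = f a
    · exact Or.inl (mem_thickening_iff.2 ⟨s, ⟨⟨s, hs⟩, h, rfl⟩, hxs'⟩)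
    · exact Or.inr (mem_thickening_iff.2 ⟨s, ⟨⟨s, hs⟩, h, rfl⟩, hxs'⟩)
  have haU : (a : X) ∈ U := self_subset_thickening hr _ ⟨a, rfl, rfl⟩
  have hbV : (b : X) ∈ V := self_subset_thickening hr _ ⟨b, Ne.symm hab, rfl⟩
  obtain ⟨x, -, hxU, hxV⟩ := isPreconnected_univ U V isOpen_thickening isOpen_thickening hcover
    ⟨a, trivial, haU⟩ ⟨b, trivial, hbV⟩
  obtain ⟨_, ⟨c, hc, rfl⟩, hxc⟩ := mem_thickening_iff.1 hxU
  obtain ⟨_, ⟨d, hd, rfl⟩, hxd⟩ := mem_thickening_iff.1 hxV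
  exact hd (hc ▸ hf d c (by linarith [dist_triangle_left (d : X) c x]))

theorem apply_sub_eq_apply_sub_of_dist_lt {E : Type*} [NormedAddCommGroup E] {A : Set E} {ρ κ ε : ℝ}
    (hsep : ∀ u ∈ (A - A) ∩ closedBall 0 κ, ∀ v ∈ (A - A) ∩ closedBall 0 κ,
      dist u v < ε → u = v)
    (hκ : ρ + ε ≤ κ) (σ : A → A) (hσ : ∀ a b : A, ‖((σ a : E) - a) - (σ b - b)‖ < ε)
    {a b : A} (hab : dist (a : E) b < ρ) : (σ a : E) - a = σ b - b := by
  have hdist : dist ((a : E) - b) (σ a - σ b) < ε := by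
    rw [dist_eq_norm, norm_sub_rev, sub_sub_sub_comm]; exact hσ a b
  have hu : (a : E) - b ∈ (A - A) ∩ closedBall 0 κ := by
    refine ⟨Set.sub_mem_sub a.2 b.2, ?_⟩
    rw [mem_closedBall_zero_iff, ← dist_eq_norm]
    linarith [dist_nonneg.trans_lt hdist]
  have hv : (σ a : E) - σ b ∈ (A - A) ∩ closedBall 0 κ := by
    refine ⟨Set.sub_mem_sub (σ a).2 (σ b).2, ?_⟩
    rw [mem_closedBall_zero_iff]
    calc ‖(σ a : E) - σ b‖ ≤ ‖(a : E) - b‖ + dist ((a : E) - b) (σ a - σ b) := by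
          rw [dist_eq_norm]; exact norm_le_norm_add_norm_sub _ _
      _ ≤ κ := by rw [← dist_eq_norm]; linarith
  rw [sub_eq_sub_iff_sub_eq_sub, hsep _ hu _ hv hdist]

section EuclideanSpace

variable {p : ℕ} {A : Set (EuclideanSpace ℝ (Fin p))}

theorem AlmostPeriodicSet.relativelyDense (hap : AlmostPeriodicSet A) (hne : A.Nonempty) :
    RelativelyDense A := by
  obtain ⟨a₀, ha₀⟩ := hne
  obtain ⟨R, hR⟩ := hap 1 one_pos
  refine ⟨R + 1, fun x => ?_⟩
  obtain ⟨τ, ⟨σ, hσ⟩, hxτ⟩ := hR (x - a₀)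
  refine ⟨σ ⟨a₀, ha₀⟩, (σ ⟨a₀, ha₀⟩).2, ?_⟩
  calc dist x (σ ⟨a₀, ha₀⟩) ≤ dist x (a₀ + τ) + dist (a₀ + τ) (σ ⟨a₀, ha₀⟩) := dist_triangle ..
    _ ≤ R + 1 := by
      rw [dist_eq_norm (a₀ + τ), dist_eq_norm x, sub_add_eq_sub_sub, ← dist_eq_norm (x - a₀)]
      linarith [hσ ⟨a₀, ha₀⟩]

theorem RelativelyDense.of_forall_exists_dist_lt {S T : Set (EuclideanSpace ℝ (Fin p))}
    (hS : RelativelyDense S) {δ : ℝ} (hST : ∀ s ∈ S, ∃ t ∈ T, dist s t < δ) :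
    RelativelyDense T := by
  obtain ⟨R, hR⟩ := hS
  refine ⟨R + δ, fun x => ?_⟩
  obtain ⟨s, hs, hxs⟩ := hR x
  obtain ⟨t, ht, hst⟩ := hST s hs
  exact ⟨t, ht, by linarith [dist_triangle x s t]⟩

theorem isPeriodOf_of_forall_apply_eq (σ : A ≃ A) {T : EuclideanSpace ℝ (Fin p)}
    (hσ : ∀ a, (σ a : EuclideanSpace ℝ (Fin p)) = a + T) : IsPeriodOf A T := by
  ext y
  constructor
  · rintro ⟨a, ha, rfl⟩
    show a + T ∈ A
    rw [← hσ ⟨a, ha⟩]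
    exact (σ ⟨a, ha⟩).2
  · intro hy
    refine ⟨σ.symm ⟨y, hy⟩, (σ.symm ⟨y, hy⟩).2, ?_⟩
    show (σ.symm ⟨y, hy⟩ : EuclideanSpace ℝ (Fin p)) + T = y
    rw [← hσ, Equiv.apply_symm_apply]

theorem IsAlmostPeriodOf.exists_isPeriodOf_norm_sub_lt {R ε : ℝ}
    {τ : EuclideanSpace ℝ (Fin p)} (hτ : IsAlmostPeriodOf A (ε / 2) τ)
    (hA : ∀ x, ∃ a ∈ A, dist x a ≤ R)
    (hsep : ∀ u ∈ (A - A) ∩ closedBall 0 (2 * R + 2), ∀ v ∈ (A - A) ∩ closedBall 0 (2 * R + 2),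
      dist u v < ε → u = v)
    (hε : ε ≤ 1) : ∃ T, IsPeriodOf A T ∧ ‖T - τ‖ < ε / 2 := by
  obtain ⟨σ, hσ⟩ := hτ
  obtain ⟨a₀, ha₀, -⟩ := hA 0
  let t : A → EuclideanSpace ℝ (Fin p) := fun a => σ a - a
  have hnear : ∀ a, ‖t a - τ‖ < ε / 2 := fun a => by
    rw [← norm_neg, neg_sub, sub_sub_eq_add_sub, add_comm τ]; exact hσ a
  have hclose : ∀ a b, ‖t a - t b‖ < ε := fun a b => by
    linarith [norm_sub_le_norm_sub_add_norm_sub (t a) τ (t b), norm_sub_rev τ (t b),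
      hnear a, hnear b]
  have hconst : ∀ a, t a = t ⟨a₀, ha₀⟩ := fun a =>
    eq_of_forall_dist_lt_of_forall_exists_dist_le hA (lt_add_one _)
      (fun _ _ => apply_sub_eq_apply_sub_of_dist_lt hsep (by linarith) σ hclose) a _
  refine ⟨t ⟨a₀, ha₀⟩, isPeriodOf_of_forall_apply_eq σ fun a => ?_, hnear _⟩
  rw [← hconst a, add_sub_cancel]

end EuclideanSpace

theorem almostPeriods_near_exact_periods_general {p : ℕ}
    (A : Set (EuclideanSpace ℝ (Fin p))) (hne : A.Nonempty)
    (hap : AlmostPeriodicSet A)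
    (hft : DiscreteSet (A - A)) :
    (∃ ε : ℝ, 0 < ε ∧ ∀ τ : EuclideanSpace ℝ (Fin p), IsAlmostPeriodOf A (ε / 2) τ →
      ∃ T : EuclideanSpace ℝ (Fin p), IsPeriodOf A T ∧ ‖T - τ‖ < ε / 2) ∧
    RelativelyDense {T | IsPeriodOf A T} := by
  obtain ⟨R, hR⟩ := hap.relativelyDense hne
  obtain ⟨ε₀, hε₀, hsep⟩ :=
    (hft.2 _ (isCompact_closedBall 0 (2 * R + 2))).exists_pos_forall_dist_lt_imp_eq
  set ε := min ε₀ 1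
  have hε : 0 < ε := lt_min hε₀ one_pos
  have key : ∀ τ, IsAlmostPeriodOf A (ε / 2) τ → ∃ T, IsPeriodOf A T ∧ ‖T - τ‖ < ε / 2 :=
    fun τ hτ => hτ.exists_isPeriodOf_norm_sub_lt hR
      (fun u hu v hv huv => hsep u hu v hv (huv.trans_le (min_le_left _ _))) (min_le_right _ _)
  refine ⟨⟨ε, hε, key⟩, (hap (ε / 2) (half_pos hε)).of_forall_exists_dist_lt (δ := ε / 2) ?_⟩
  intro τ hτ
  obtain ⟨T, hT, hTτ⟩ := key τ hτ
  exact ⟨T, hT, by rwa [dist_comm, dist_eq_norm]⟩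

/-- For a nonempty discrete almost periodic set of finite type, there is `ε > 0` such
that every `ε/2`-almost period lies within `ε/2` of an exact period; consequently the
set of periods is relatively dense. -/
theorem almostPeriods_near_exact_periods {p : ℕ}
    (A : Set (EuclideanSpace ℝ (Fin p))) (hne : A.Nonempty)
    (hdisc : DiscreteSet A) (hap : AlmostPeriodicSet A)
    (hft : DiscreteSet (A - A)) :
    (∃ ε : ℝ, 0 < ε ∧ ∀ τ : EuclideanSpace ℝ (Fin p), IsAlmostPeriodOf A (ε / 2) τ →
      ∃ T : EuclideanSpace ℝ (Fin p), IsPeriodOf A T ∧ ‖T - τ‖ < ε / 2) ∧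
    RelativelyDense {T | IsPeriodOf A T} :=
  almostPeriods_near_exact_periods_general A hne hap hft
end
end
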